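/- For real z with -1 < z < θ and (θ,ρ) admissible parameters, b = (1/π) arccos(p·cos(πσ)) with σ = 1/2 - θ(1-ρ), the function Ψ*(z) = (1/π) Γ(θ-z) Γ(1+z) [cos(πb) - cos(π(z+σ))] factorizes as Ψ*(z) = 2^θ · Γ((1+z)/2)Γ((2+z)/2)Γ((θ-z)/2)Γ((1+θ-z)/2) / [Γ((σ+b+z)/2)Γ((σ-b+z)/2)Γ((2-σ+b-z)/2)Γ((2-σ-b-z)/2)]. -/

import Mathlib

open Real

/-- The admissible parameter set `𝔸` for the stable process. -/
def admissiblePair (θ ρ : ℝ) : Prop :=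
  (θ ∈ Set.Ioo (0 : ℝ) 1 ∧ ρ ∈ Set.Ioo (0 : ℝ) 1) ∨
    (θ ∈ Set.Ioo (1 : ℝ) 2 ∧ ρ ∈ Set.Ioo (1 - 1 / θ) (1 / θ))

/-! Duplication turns the four gamma factors of the numerator into `Γ(1 + z) Γ(θ - z)`, and
reflection pairs the four factors of the denominator into `π² / (sin (π u / 2) sin (π v / 2))`
with `u = σ + b + z`, `v = σ - b + z`; the product-to-sum formula
`cos (π b) - cos (π (z + σ)) = 2 sin (π u / 2) sin (π v / 2)` matches the two sides. -/

theorem Real.Gamma_half_mul_Gamma_add_one_half (x : ℝ) :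
    Gamma (x / 2) * Gamma ((x + 1) / 2) = 2 ^ (1 - x) * √π * Gamma x := by
  have h := Gamma_mul_Gamma_add_half (x / 2)
  rw [show x / 2 + 1 / 2 = (x + 1) / 2 by ring, mul_div_cancel₀ x two_ne_zero] at h
  rw [h]
  ring

theorem Real.Gamma_half_mul_Gamma_two_sub_half (x : ℝ) :
    Gamma (x / 2) * Gamma ((2 - x) / 2) = π / sin (π * x / 2) := by
  rw [show (2 - x) / 2 = 1 - x / 2 by ring, Gamma_mul_Gamma_one_sub, mul_div_assoc]

theorem Real.cos_mul_sub_cos_mul (c a b : ℝ) :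
    cos (c * b) - cos (c * a) = 2 * sin (c * (a + b) / 2) * sin (c * (a - b) / 2) := by
  rw [cos_sub_cos, show (c * b - c * a) / 2 = -(c * (a - b) / 2) by ring, sin_neg]
  ring_nf

theorem Real.Gamma_mul_Gamma_mul_sin_mul_sin (x y u v : ℝ) :
    (1 / π) * Gamma x * Gamma y * (2 * sin (π * u / 2) * sin (π * v / 2)) =
      2 ^ (x + y - 1) * (Gamma (x / 2) * Gamma ((x + 1) / 2) * Gamma (y / 2) * Gamma ((y + 1) / 2)) /
        (Gamma (u / 2) * Gamma (v / 2) * Gamma ((2 - v) / 2) * Gamma ((2 - u) / 2)) := by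
  have numerator :
      Gamma (x / 2) * Gamma ((x + 1) / 2) * Gamma (y / 2) * Gamma ((y + 1) / 2) =
        (2 ^ (1 - x) * 2 ^ (1 - y)) * (√π * √π) * (Gamma x * Gamma y) := by
    rw [mul_assoc _ (Gamma (y / 2)), Gamma_half_mul_Gamma_add_one_half,
      Gamma_half_mul_Gamma_add_one_half]
    ring
  have denominator :
      Gamma (u / 2) * Gamma (v / 2) * Gamma ((2 - v) / 2) * Gamma ((2 - u) / 2) =
        π * π / (sin (π * u / 2) * sin (π * v / 2)) := by
    rw [show Gamma (u / 2) * Gamma (v / 2) * Gamma ((2 - v) / 2) * Gamma ((2 - u) / 2) =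
        (Gamma (u / 2) * Gamma ((2 - u) / 2)) * (Gamma (v / 2) * Gamma ((2 - v) / 2)) by ring,
      Gamma_half_mul_Gamma_two_sub_half, Gamma_half_mul_Gamma_two_sub_half, div_mul_div_comm]
  have two_pow : (2 : ℝ) ^ (x + y - 1) * (2 ^ (1 - x) * 2 ^ (1 - y)) = 2 := by
    rw [← rpow_add two_pos, ← rpow_add two_pos, show x + y - 1 + (1 - x + (1 - y)) = 1 by ring,
      rpow_one]
  rw [numerator, denominator, mul_self_sqrt pi_pos.le, div_div_eq_mul_div]
  field_simp
  linear_combination -(Gamma x * Gamma y * sin (π * u / 2) * sin (π * v / 2)) * two_pow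

theorem laplace_exponent_factorization_general (θ σ b z : ℝ) :
    (1 / π) * Real.Gamma (θ - z) * Real.Gamma (1 + z) *
        (Real.cos (π * b) - Real.cos (π * (z + σ))) =
      2 ^ θ *
        (Real.Gamma ((1 + z) / 2) * Real.Gamma ((2 + z) / 2) * Real.Gamma ((θ - z) / 2) *
            Real.Gamma ((1 + θ - z) / 2)) /
          (Real.Gamma ((σ + b + z) / 2) * Real.Gamma ((σ - b + z) / 2) *
            Real.Gamma ((2 - σ + b - z) / 2) * Real.Gamma ((2 - σ - b - z) / 2)) := by
  rw [cos_mul_sub_cos_mul, Gamma_mul_Gamma_mul_sin_mul_sin (θ - z) (1 + z)]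
  ring_nf

/-- For `(θ,ρ) ∈ 𝔸`, `p ∈ [0,1]`, `σ = 1/2 - θ(1-ρ)`, `b = (1/π) arccos(p cos(πσ))`, and
real `z` with `-1 < z < θ`, the Laplace exponent
`Ψ*(z) = (1/π) Γ(θ-z) Γ(1+z) [cos(πb) - cos(π(z+σ))]` factorizes in terms of gamma
functions. -/
theorem laplace_exponent_factorization (θ ρ p σ b z : ℝ)
    (hA : admissiblePair θ ρ) (hp : p ∈ Set.Icc (0 : ℝ) 1)
    (hσ : σ = 1 / 2 - θ * (1 - ρ))
    (hb : b = Real.arccos (p * Real.cos (π * σ)) / π)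
    (hz1 : -1 < z) (hz2 : z < θ) :
    (1 / π) * Real.Gamma (θ - z) * Real.Gamma (1 + z) *
        (Real.cos (π * b) - Real.cos (π * (z + σ))) =
      2 ^ θ *
        (Real.Gamma ((1 + z) / 2) * Real.Gamma ((2 + z) / 2) * Real.Gamma ((θ - z) / 2) *
            Real.Gamma ((1 + θ - z) / 2)) /
          (Real.Gamma ((σ + b + z) / 2) * Real.Gamma ((σ - b + z) / 2) *
            Real.Gamma ((2 - σ + b - z) / 2) * Real.Gamma ((2 - σ - b - z) / 2)) :=
  laplace_exponent_factorization_general θ σ b z
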